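/- arXiv:1909.09686 — 3 statements merged into one kernel-verified Lean document; each statement's English description precedes it below -/
import Mathlib

section
/- In the Weyl algebra in 2n+n variables, the operators X_s = Σ_{j=1}^n (y_j·∂_{q_j} + i·x_j·q_j), D_s = Σ_{j=1}^n (i·q_j·∂_{y_j} - ∂_{x_j}·∂_{q_j}), and H = E + n (where E = Σ_j (x_j·∂_{x_j} + y_j·∂_{y_j}) is the Euler operator) satisfy the relations [H, X_s] = X_s, [H, D_s] = -D_s, and [D_s, X_s] = -i·H. -/
/- The complexified Weyl algebra on variables x_1,…,x_n, y_1,…,y_n, q_1,…,q_n,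
   realized faithfully as operators on the polynomial space
   ℂ[x_1,…,q_n]; a variable is indexed by a pair `(t, j) : Fin 3 × Fin n`
   with `t = 0` for `x_j`, `t = 1` for `y_j`, `t = 2` for `q_j`. -/

noncomputable section

open MvPolynomial

variable (n : ℕ)

/-- Multiplication by the variable `v`. -/
def mulOp (v : Fin 3 × Fin n) : Module.End ℂ (MvPolynomial (Fin 3 × Fin n) ℂ) :=
  LinearMap.mulLeft ℂ (X v)

/-- Partial derivative with respect to the variable `v`. -/
def derOp (v : Fin 3 × Fin n) : Module.End ℂ (MvPolynomial (Fin 3 × Fin n) ℂ) :=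
  (pderiv v).toLinearMap

/-- The symplectic creation operator `X_s = Σ_j (y_j·∂_{q_j} + i·x_j·q_j)`. -/
def Xs : Module.End ℂ (MvPolynomial (Fin 3 × Fin n) ℂ) :=
  ∑ j : Fin n, (mulOp n (1, j) * derOp n (2, j) + Complex.I • (mulOp n (0, j) * mulOp n (2, j)))

/-- The symplectic Dirac operator `D_s = Σ_j (i·q_j·∂_{y_j} - ∂_{x_j}·∂_{q_j})`. -/
def Ds : Module.End ℂ (MvPolynomial (Fin 3 × Fin n) ℂ) :=
  ∑ j : Fin n, (Complex.I • (mulOp n (2, j) * derOp n (1, j)) - derOp n (0, j) * derOp n (2, j))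

/-- The Euler operator `E = Σ_j (x_j·∂_{x_j} + y_j·∂_{y_j})`. -/
def euler : Module.End ℂ (MvPolynomial (Fin 3 × Fin n) ℂ) :=
  ∑ j : Fin n, (mulOp n (0, j) * derOp n (0, j) + mulOp n (1, j) * derOp n (1, j))

-- ===== auxiliary lemmas =====

section AbstractWeyl
variable {R : Type*} [Ring R]

lemma keyE_aux (U u V : R) (h : u*U = U*u + 1) (h1 : u*V = V*u) (h2 : U*V = V*U) :
    (U*u)*(U*V) - (U*V)*(U*u) = U*V := by
  calc (U*u)*(U*V) - (U*V)*(U*u)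
      = U*(u*U)*V - U*(V*U)*u := by noncomm_ring
    _ = U*(U*u + 1)*V - U*(U*V)*u := by rw [h, ← h2]
    _ = U*U*(u*V) + U*V - U*U*(V*u) := by noncomm_ring
    _ = U*V := by rw [h1]; noncomm_ring

lemma keyD_aux (U u V : R) (h : u*U = U*u + 1) (h1 : u*V = V*u) (h2 : U*V = V*U) :
    (U*u)*(u*V) - (u*V)*(U*u) = -(u*V) := by
  calc (U*u)*(u*V) - (u*V)*(U*u)
      = U*(u*u)*V - u*(V*U)*u := by noncomm_ring
    _ = U*(u*u)*V - u*(U*V)*u := by rw [← h2]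
    _ = U*(u*u)*V - (u*U)*(V*u) := by noncomm_ring
    _ = U*(u*u)*V - (U*u + 1)*(u*V) := by rw [h, h1]
    _ = -(u*V) := by noncomm_ring

lemma keyD2_aux (U u V : R) (h : u*U = U*u + 1) (h1 : u*V = V*u) (h2 : U*V = V*U) :
    (U*u)*(V*u) - (V*u)*(U*u) = -(V*u) := by
  calc (U*u)*(V*u) - (V*u)*(U*u)
      = U*(u*V)*u - V*(u*U)*u := by noncomm_ring
    _ = U*(V*u)*u - V*(U*u + 1)*u := by rw [h, h1]
    _ = (U*V)*(u*u) - (V*U)*(u*u) - V*u := by noncomm_ring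
    _ = -(V*u) := by rw [h2]; noncomm_ring

lemma keyX_aux (B C b c : R) (hb : b*B = B*b + 1) (hc : c*C = C*c + 1)
    (hBC : B*C = C*B) (hbc : b*c = c*b) :
    (C*b)*(B*c) - (B*c)*(C*b) = C*c - B*b := by
  calc (C*b)*(B*c) - (B*c)*(C*b)
      = C*(b*B)*c - B*(c*C)*b := by noncomm_ring
    _ = C*(B*b + 1)*c - B*(C*c + 1)*b := by rw [hb, hc]
    _ = (C*B)*(b*c) - (B*C)*(c*b) + (C*c - B*b) := by noncomm_ring
    _ = C*c - B*b := by rw [hBC, hbc]; noncomm_ring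

lemma keyY_aux (A C a c : R) (ha : a*A = A*a + 1) (hc : c*C = C*c + 1)
    (h1 : a*C = C*a) (h2 : c*A = A*c) :
    (a*c)*(A*C) - (A*C)*(a*c) = A*a + C*c + 1 := by
  have e1 : (a*c)*(A*C) = (a*A)*(c*C) := by
    calc (a*c)*(A*C) = a*(c*A)*C := by noncomm_ring
      _ = a*(A*c)*C := by rw [h2]
      _ = (a*A)*(c*C) := by noncomm_ring
  have e2 : (A*C)*(a*c) = (A*a)*(C*c) := by
    calc (A*C)*(a*c) = A*(C*a)*c := by noncomm_ring
      _ = A*(a*C)*c := by rw [← h1]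
      _ = (A*a)*(C*c) := by noncomm_ring
  rw [e1, e2, ha, hc]
  noncomm_ring

set_option linter.unusedSectionVars false

variable (z A B C a b c : R) (hz : ∀ r : R, z*r = r*z)
variable (ha : a*A = A*a + 1) (hb : b*B = B*b + 1) (hc : c*C = C*c + 1)
variable (hAB : Commute A B) (hAC : Commute A C) (hBC : Commute B C)
variable (hab : Commute a b) (hac : Commute a c) (hbc : Commute b c)
variable (haB : Commute a B) (haC : Commute a C)
variable (hbA : Commute b A) (hbC : Commute b C)
variable (hcA : Commute c A) (hcB : Commute c B)

include hz ha hb hc hAB hAC hBC hab hac hbc haB haC hbA hbC hcA hcB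

lemma L1_aux : (A*a + B*b) * (B*c + z*(A*C)) - (B*c + z*(A*C)) * (A*a + B*b)
    = B*c + z*(A*C) := by
  have e : ∀ P Q : R, P*(z*Q) = z*(P*Q) := fun P Q => by rw [← mul_assoc, ← hz, mul_assoc]
  have hk1 : (A*a)*(B*c) - (B*c)*(A*a) = 0 :=
    sub_eq_zero_of_eq ((hAB.mul_left haB).mul_right (hcA.symm.mul_left hac)).eq
  have hk2 := keyE_aux A a C ha haC.eq hAC.eq
  have hk3 := keyE_aux B b c hb hbc.eq hcB.symm.eq
  have hk4 : (B*b)*(A*C) - (A*C)*(B*b) = 0 :=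
    sub_eq_zero_of_eq ((hAB.symm.mul_left hbA).mul_right (hBC.mul_left hbC)).eq
  calc (A*a + B*b) * (B*c + z*(A*C)) - (B*c + z*(A*C)) * (A*a + B*b)
      = ((A*a)*(B*c) - (B*c)*(A*a)) + z*((A*a)*(A*C) - (A*C)*(A*a))
        + ((B*b)*(B*c) - (B*c)*(B*b)) + z*((B*b)*(A*C) - (A*C)*(B*b)) := by
        simp only [mul_add, add_mul, e]; noncomm_ring
    _ = 0 + z*(A*C) + (B*c) + z*0 := by rw [hk1, hk2, hk3, hk4]
    _ = B*c + z*(A*C) := by noncomm_ring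

lemma L2_aux : (A*a + B*b) * (z*(C*b) - a*c) - (z*(C*b) - a*c) * (A*a + B*b)
    = -(z*(C*b) - a*c) := by
  have e : ∀ P Q : R, P*(z*Q) = z*(P*Q) := fun P Q => by rw [← mul_assoc, ← hz, mul_assoc]
  have hk1 : (A*a)*(C*b) - (C*b)*(A*a) = 0 :=
    sub_eq_zero_of_eq ((hAC.mul_left haC).mul_right ((hbA.symm).mul_left hab)).eq
  have hk2 := keyD_aux A a c ha hac.eq hcA.symm.eq
  have hk3 := keyD2_aux B b C hb hbC.eq hBC.eq
  have hk4 : (B*b)*(a*c) - (a*c)*(B*b) = 0 :=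
    sub_eq_zero_of_eq ((haB.symm.mul_left hab.symm).mul_right (hcB.symm.mul_left hbc)).eq
  calc (A*a + B*b) * (z*(C*b) - a*c) - (z*(C*b) - a*c) * (A*a + B*b)
      = z*((A*a)*(C*b) - (C*b)*(A*a)) - ((A*a)*(a*c) - (a*c)*(A*a))
        + z*((B*b)*(C*b) - (C*b)*(B*b)) - ((B*b)*(a*c) - (a*c)*(B*b)) := by
        simp only [mul_add, add_mul, mul_sub, sub_mul, e]; noncomm_ring
    _ = z*0 - (-(a*c)) + z*(-(C*b)) - 0 := by rw [hk1, hk2, hk3, hk4]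
    _ = -(z*(C*b) - a*c) := by noncomm_ring

lemma L3_aux : (z*(C*b) - a*c) * (B*c + z*(A*C)) - (B*c + z*(A*C)) * (z*(C*b) - a*c)
    = -(z*(A*a + B*b + 1)) := by
  have e : ∀ P Q : R, P*(z*Q) = z*(P*Q) := fun P Q => by rw [← mul_assoc, ← hz, mul_assoc]
  have hk1 := keyX_aux B C b c hb hc hBC.eq hbc.eq
  have hk2 : (C*b)*(A*C) - (A*C)*(C*b) = 0 :=
    sub_eq_zero_of_eq ((hAC.symm.mul_left hbA).mul_right ((Commute.refl C).mul_left hbC)).eq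
  have hk3 : (a*c)*(B*c) - (B*c)*(a*c) = 0 :=
    sub_eq_zero_of_eq ((haB.mul_left hcB).mul_right (hac.mul_left (Commute.refl c))).eq
  have hk4 := keyY_aux A C a c ha hc haC.eq hcA.eq
  calc (z*(C*b) - a*c) * (B*c + z*(A*C)) - (B*c + z*(A*C)) * (z*(C*b) - a*c)
      = z*((C*b)*(B*c) - (B*c)*(C*b)) + z*(z*((C*b)*(A*C) - (A*C)*(C*b)))
        - ((a*c)*(B*c) - (B*c)*(a*c)) - z*((a*c)*(A*C) - (A*C)*(a*c)) := by
        simp only [mul_add, add_mul, mul_sub, sub_mul, e]; noncomm_ring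
    _ = z*(C*c - B*b) + z*(z*0) - 0 - z*(A*a + C*c + 1) := by rw [hk1, hk2, hk3, hk4]
    _ = -(z*(A*a + B*b + 1)) := by noncomm_ring

end AbstractWeyl

lemma sum_commutator_aux {R : Type*} [Ring R] {n : ℕ} (P Q : Fin n → R)
    (h : ∀ j k, j ≠ k → Commute (P j) (Q k)) :
    (∑ j, P j) * (∑ k, Q k) - (∑ k, Q k) * (∑ j, P j)
      = ∑ j, (P j * Q j - Q j * P j) := by
  calc (∑ j, P j) * (∑ k, Q k) - (∑ k, Q k) * (∑ j, P j)
      = ∑ j, ∑ k, (P j * Q k - Q k * P j) := by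
        rw [Finset.sum_mul_sum, Finset.sum_mul_sum,
          Finset.sum_comm (f := fun k j => Q k * P j), ← Finset.sum_sub_distrib]
        exact Finset.sum_congr rfl fun j _ => (Finset.sum_sub_distrib _ _).symm
    _ = ∑ j, (P j * Q j - Q j * P j) :=
        Finset.sum_congr rfl fun j _ =>
          Finset.sum_eq_single_of_mem j (Finset.mem_univ j)
            (fun k _ hk => sub_eq_zero_of_eq ((h j k (Ne.symm hk)).eq))

-- atomic commutation lemmas for the Weyl algebra operators

lemma mulOp_comm (v w : Fin 3 × Fin n) : Commute (mulOp n v) (mulOp n w) := by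
  apply LinearMap.ext; intro p
  simp only [mulOp, Module.End.mul_apply, LinearMap.mulLeft_apply, ← mul_assoc,
    mul_comm (X v) (X w)]

lemma derOp_comm (v w : Fin 3 × Fin n) : Commute (derOp n v) (derOp n w) := by
  apply LinearMap.ext; intro p
  simp only [derOp, Module.End.mul_apply, Derivation.coeFn_coe]
  classical
  induction p using MvPolynomial.induction_on with
  | C a => simp
  | add p q hp hq => simp [hp, hq]
  | mul_X p k hp =>
      simp [pderiv_mul, hp, Pi.single_apply]
      split_ifs <;> (try simp only [map_zero]) <;> ring

lemma der_mul_eq (v w : Fin 3 × Fin n) :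
    derOp n v * mulOp n w = mulOp n w * derOp n v + (if v = w then 1 else 0) := by
  apply LinearMap.ext; intro p
  simp only [derOp, mulOp, Module.End.mul_apply, LinearMap.mulLeft_apply, LinearMap.add_apply,
    Derivation.coeFn_coe]
  classical
  rw [pderiv_mul]
  by_cases h : v = w
  · subst h; simp [add_comm]
  · simp [h, pderiv_X_of_ne (Ne.symm h), add_comm]

lemma derOp_mulOp_comm {v w : Fin 3 × Fin n} (h : v ≠ w) :
    Commute (derOp n v) (mulOp n w) := by
  unfold Commute SemiconjBy
  rw [der_mul_eq, if_neg h, add_zero]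

lemma weyl_ccr (v : Fin 3 × Fin n) :
    derOp n v * mulOp n v = mulOp n v * derOp n v + 1 := by
  rw [der_mul_eq, if_pos rfl]

-- commutation helpers for composite terms

lemma commute_Eterm {u : Module.End ℂ (MvPolynomial (Fin 3 × Fin n) ℂ)} {j : Fin n}
    (h1 : Commute u (mulOp n (0, j))) (h2 : Commute u (derOp n (0, j)))
    (h3 : Commute u (mulOp n (1, j))) (h4 : Commute u (derOp n (1, j))) :
    Commute u (mulOp n (0, j) * derOp n (0, j) + mulOp n (1, j) * derOp n (1, j)) :=
  (h1.mul_right h2).add_right (h3.mul_right h4)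

lemma commute_Xterm {u : Module.End ℂ (MvPolynomial (Fin 3 × Fin n) ℂ)} {k : Fin n}
    (h1 : Commute u (mulOp n (0, k))) (h2 : Commute u (mulOp n (1, k)))
    (h3 : Commute u (mulOp n (2, k))) (h4 : Commute u (derOp n (2, k))) :
    Commute u (mulOp n (1, k) * derOp n (2, k)
      + Complex.I • (mulOp n (0, k) * mulOp n (2, k))) :=
  (h2.mul_right h4).add_right ((h1.mul_right h3).smul_right _)

lemma commute_Dterm {u : Module.End ℂ (MvPolynomial (Fin 3 × Fin n) ℂ)} {k : Fin n}
    (h1 : Commute u (mulOp n (2, k))) (h2 : Commute u (derOp n (1, k)))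
    (h3 : Commute u (derOp n (0, k))) (h4 : Commute u (derOp n (2, k))) :
    Commute u (Complex.I • (mulOp n (2, k) * derOp n (1, k))
      - derOp n (0, k) * derOp n (2, k)) :=
  ((h1.mul_right h2).smul_right _).sub_right (h3.mul_right h4)

lemma pair_ne {j k : Fin n} (h : j ≠ k) (s t : Fin 3) : (s, j) ≠ (t, k) :=
  fun he => h (congrArg Prod.snd he)

-- reduction of H to the Euler operator in commutators
lemma H_comm_reduce (T : Module.End ℂ (MvPolynomial (Fin 3 × Fin n) ℂ)) :
    (euler n + (n : ℂ) • 1) * T - T * (euler n + (n : ℂ) • 1)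
      = euler n * T - T * euler n := by
  simp only [add_mul, mul_add, smul_mul_assoc, mul_smul_comm, one_mul, mul_one]
  abel

lemma pair_ne' {s t : Fin 3} (h : s ≠ t) (j : Fin n) : (s, j) ≠ (t, j) :=
  fun he => h (congrArg Prod.fst he)

lemma diagEX (j : Fin n) :
    (mulOp n (0, j) * derOp n (0, j) + mulOp n (1, j) * derOp n (1, j)) *
      (mulOp n (1, j) * derOp n (2, j) + Complex.I • (mulOp n (0, j) * mulOp n (2, j)))
    - (mulOp n (1, j) * derOp n (2, j) + Complex.I • (mulOp n (0, j) * mulOp n (2, j))) *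
      (mulOp n (0, j) * derOp n (0, j) + mulOp n (1, j) * derOp n (1, j))
    = mulOp n (1, j) * derOp n (2, j) + Complex.I • (mulOp n (0, j) * mulOp n (2, j)) := by
  simp only [Algebra.smul_def]
  exact L1_aux (algebraMap ℂ _ Complex.I)
    (mulOp n (0, j)) (mulOp n (1, j)) (mulOp n (2, j))
    (derOp n (0, j)) (derOp n (1, j)) (derOp n (2, j))
    (fun r => Algebra.commutes Complex.I r)
    (weyl_ccr n (0, j)) (weyl_ccr n (1, j)) (weyl_ccr n (2, j))
    (mulOp_comm n _ _) (mulOp_comm n _ _) (mulOp_comm n _ _)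
    (derOp_comm n _ _) (derOp_comm n _ _) (derOp_comm n _ _)
    (derOp_mulOp_comm n (pair_ne' n (by decide) j))
    (derOp_mulOp_comm n (pair_ne' n (by decide) j))
    (derOp_mulOp_comm n (pair_ne' n (by decide) j))
    (derOp_mulOp_comm n (pair_ne' n (by decide) j))
    (derOp_mulOp_comm n (pair_ne' n (by decide) j))
    (derOp_mulOp_comm n (pair_ne' n (by decide) j))

lemma diagED (j : Fin n) :
    (mulOp n (0, j) * derOp n (0, j) + mulOp n (1, j) * derOp n (1, j)) *
      (Complex.I • (mulOp n (2, j) * derOp n (1, j)) - derOp n (0, j) * derOp n (2, j))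
    - (Complex.I • (mulOp n (2, j) * derOp n (1, j)) - derOp n (0, j) * derOp n (2, j)) *
      (mulOp n (0, j) * derOp n (0, j) + mulOp n (1, j) * derOp n (1, j))
    = -(Complex.I • (mulOp n (2, j) * derOp n (1, j)) - derOp n (0, j) * derOp n (2, j)) := by
  simp only [Algebra.smul_def]
  exact L2_aux (algebraMap ℂ _ Complex.I)
    (mulOp n (0, j)) (mulOp n (1, j)) (mulOp n (2, j))
    (derOp n (0, j)) (derOp n (1, j)) (derOp n (2, j))
    (fun r => Algebra.commutes Complex.I r)
    (weyl_ccr n (0, j)) (weyl_ccr n (1, j)) (weyl_ccr n (2, j))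
    (mulOp_comm n _ _) (mulOp_comm n _ _) (mulOp_comm n _ _)
    (derOp_comm n _ _) (derOp_comm n _ _) (derOp_comm n _ _)
    (derOp_mulOp_comm n (pair_ne' n (by decide) j))
    (derOp_mulOp_comm n (pair_ne' n (by decide) j))
    (derOp_mulOp_comm n (pair_ne' n (by decide) j))
    (derOp_mulOp_comm n (pair_ne' n (by decide) j))
    (derOp_mulOp_comm n (pair_ne' n (by decide) j))
    (derOp_mulOp_comm n (pair_ne' n (by decide) j))

lemma diagDX (j : Fin n) :
    (Complex.I • (mulOp n (2, j) * derOp n (1, j)) - derOp n (0, j) * derOp n (2, j)) *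
      (mulOp n (1, j) * derOp n (2, j) + Complex.I • (mulOp n (0, j) * mulOp n (2, j)))
    - (mulOp n (1, j) * derOp n (2, j) + Complex.I • (mulOp n (0, j) * mulOp n (2, j))) *
      (Complex.I • (mulOp n (2, j) * derOp n (1, j)) - derOp n (0, j) * derOp n (2, j))
    = -(algebraMap ℂ (Module.End ℂ (MvPolynomial (Fin 3 × Fin n) ℂ)) Complex.I *
        ((mulOp n (0, j) * derOp n (0, j) + mulOp n (1, j) * derOp n (1, j)) + 1)) := by
  simp only [Algebra.smul_def]
  exact L3_aux (algebraMap ℂ _ Complex.I)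
    (mulOp n (0, j)) (mulOp n (1, j)) (mulOp n (2, j))
    (derOp n (0, j)) (derOp n (1, j)) (derOp n (2, j))
    (fun r => Algebra.commutes Complex.I r)
    (weyl_ccr n (0, j)) (weyl_ccr n (1, j)) (weyl_ccr n (2, j))
    (mulOp_comm n _ _) (mulOp_comm n _ _) (mulOp_comm n _ _)
    (derOp_comm n _ _) (derOp_comm n _ _) (derOp_comm n _ _)
    (derOp_mulOp_comm n (pair_ne' n (by decide) j))
    (derOp_mulOp_comm n (pair_ne' n (by decide) j))
    (derOp_mulOp_comm n (pair_ne' n (by decide) j))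
    (derOp_mulOp_comm n (pair_ne' n (by decide) j))
    (derOp_mulOp_comm n (pair_ne' n (by decide) j))
    (derOp_mulOp_comm n (pair_ne' n (by decide) j))

section Cross
variable {j k : Fin n}

lemma cB_aux (h : j ≠ k) (s t : Fin 3) : Commute (mulOp n (s, j)) (derOp n (t, k)) :=
  (derOp_mulOp_comm n (pair_ne n h.symm t s)).symm

lemma cD_aux (h : j ≠ k) (s t : Fin 3) : Commute (derOp n (s, j)) (mulOp n (t, k)) :=
  derOp_mulOp_comm n (pair_ne n h s t)

lemma cEm_aux (h : j ≠ k) (s : Fin 3) :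
    Commute (mulOp n (0, j) * derOp n (0, j) + mulOp n (1, j) * derOp n (1, j))
      (mulOp n (s, k)) :=
  (commute_Eterm n (mulOp_comm n _ _) (cB_aux n h.symm s 0)
    (mulOp_comm n _ _) (cB_aux n h.symm s 1)).symm

lemma cEd_aux (h : j ≠ k) (s : Fin 3) :
    Commute (mulOp n (0, j) * derOp n (0, j) + mulOp n (1, j) * derOp n (1, j))
      (derOp n (s, k)) :=
  (commute_Eterm n (cD_aux n h.symm s 0) (derOp_comm n _ _)
    (cD_aux n h.symm s 1) (derOp_comm n _ _)).symm

lemma cDm_aux (h : j ≠ k) (s : Fin 3) :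
    Commute (Complex.I • (mulOp n (2, j) * derOp n (1, j)) - derOp n (0, j) * derOp n (2, j))
      (mulOp n (s, k)) :=
  (commute_Dterm n (mulOp_comm n _ _) (cB_aux n h.symm s 1)
    (cB_aux n h.symm s 0) (cB_aux n h.symm s 2)).symm

lemma cDd_aux (h : j ≠ k) (s : Fin 3) :
    Commute (Complex.I • (mulOp n (2, j) * derOp n (1, j)) - derOp n (0, j) * derOp n (2, j))
      (derOp n (s, k)) :=
  (commute_Dterm n (cD_aux n h.symm s 2) (derOp_comm n _ _)
    (derOp_comm n _ _) (derOp_comm n _ _)).symm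

lemma crossEX (h : j ≠ k) :
    Commute (mulOp n (0, j) * derOp n (0, j) + mulOp n (1, j) * derOp n (1, j))
      (mulOp n (1, k) * derOp n (2, k) + Complex.I • (mulOp n (0, k) * mulOp n (2, k))) :=
  commute_Xterm n (cEm_aux n h 0) (cEm_aux n h 1) (cEm_aux n h 2) (cEd_aux n h 2)

lemma crossED (h : j ≠ k) :
    Commute (mulOp n (0, j) * derOp n (0, j) + mulOp n (1, j) * derOp n (1, j))
      (Complex.I • (mulOp n (2, k) * derOp n (1, k)) - derOp n (0, k) * derOp n (2, k)) :=
  commute_Dterm n (cEm_aux n h 2) (cEd_aux n h 1) (cEd_aux n h 0) (cEd_aux n h 2)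

lemma crossDX (h : j ≠ k) :
    Commute (Complex.I • (mulOp n (2, j) * derOp n (1, j)) - derOp n (0, j) * derOp n (2, j))
      (mulOp n (1, k) * derOp n (2, k) + Complex.I • (mulOp n (0, k) * mulOp n (2, k))) :=
  commute_Xterm n (cDm_aux n h 0) (cDm_aux n h 1) (cDm_aux n h 2) (cDd_aux n h 2)

end Cross

lemma rel1 : (euler n + (n : ℂ) • 1) * Xs n - Xs n * (euler n + (n : ℂ) • 1) = Xs n := by
  rw [H_comm_reduce, euler, Xs,
    sum_commutator_aux _ _ (fun j k h => crossEX n h)]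
  exact Finset.sum_congr rfl fun j _ => diagEX n j

lemma rel2 : (euler n + (n : ℂ) • 1) * Ds n - Ds n * (euler n + (n : ℂ) • 1) = -Ds n := by
  rw [H_comm_reduce, euler, Ds,
    sum_commutator_aux _ _ (fun j k h => crossED n h), ← Finset.sum_neg_distrib]
  exact Finset.sum_congr rfl fun j _ => diagED n j

lemma rel3 : Ds n * Xs n - Xs n * Ds n = -Complex.I • (euler n + (n : ℂ) • 1) := by
  have hrhs : -Complex.I • (euler n + (n : ℂ) • 1 :
      Module.End ℂ (MvPolynomial (Fin 3 × Fin n) ℂ))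
      = ∑ j : Fin n, -(algebraMap ℂ (Module.End ℂ (MvPolynomial (Fin 3 × Fin n) ℂ)) Complex.I *
          ((mulOp n (0, j) * derOp n (0, j) + mulOp n (1, j) * derOp n (1, j)) + 1)) := by
    rw [Algebra.smul_def, map_neg, euler]
    rw [show ((n : ℂ) • 1 : Module.End ℂ (MvPolynomial (Fin 3 × Fin n) ℂ))
        = ∑ _j : Fin n, 1 by
      simp [Finset.sum_const, Nat.cast_smul_eq_nsmul]]
    rw [← Finset.sum_add_distrib, Finset.mul_sum]
    exact Finset.sum_congr rfl fun j _ => neg_mul _ _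
  rw [Ds, Xs, sum_commutator_aux _ _ (fun j k h => crossDX n h), hrhs]
  exact Finset.sum_congr rfl fun j _ => diagDX n j

/-- In the Weyl algebra in `2n + n` variables, the operators `X_s`, `D_s` and
`H = E + n` (with `E` the Euler operator) satisfy `[H, X_s] = X_s`,
`[H, D_s] = -D_s` and `[D_s, X_s] = -i·H`. -/
theorem sl2_relations :
    letI H : Module.End ℂ (MvPolynomial (Fin 3 × Fin n) ℂ) := euler n + (n : ℂ) • 1
    (H * Xs n - Xs n * H = Xs n) ∧
    (H * Ds n - Ds n * H = -Ds n) ∧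
    (Ds n * Xs n - Xs n * Ds n = -Complex.I • H) :=
  ⟨rel1 n, rel2 n, rel3 n⟩

end
end

section
/- For the classical Dirac setting: in the Weyl algebra tensor Clifford algebra on ℝ^m, the deformed raising operator R := I_α ∘ ∂_{x_1} ∘ I_α (conjugation of ∂_{x_1} by the α-deformed inversion I_α[f](x) = (x/|x|^{m+α})·f(x/|x|²)) acts on polynomials as R = -|x|²·∂_{x_1} + x_1·(2E + m - 1 + α) + 𝐱·e_1, where E is the Euler operator and 𝐱 = Σ_{j≥2} e_j x_j. -/
/- The Clifford-analysis setting: `A` is a (normed) algebra containing generators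
   `e 0, …, e (m-1)` satisfying the Clifford relations `e p * e q + e q * e p = -2δ_{pq}`;
   functions on `ℝ^m` take values in `A`. -/

noncomputable section

open Finset

variable {m : ℕ} [NeZero m] {A : Type*} [NormedRing A] [NormedAlgebra ℝ A]

/-- The squared norm `|x|² = Σ_j x_j²`. -/
def nsq (x : Fin m → ℝ) : ℝ := ∑ j, x j ^ 2

/-- The Clifford vector variable `x̲ = Σ_j x_j e_j`. -/
def vx (e : Fin m → A) (x : Fin m → ℝ) : A := ∑ j, x j • e j

/-- The Clifford vector `𝐱 = Σ_{j≥2} x_j e_j` (all coordinates except the first). -/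
def bx (e : Fin m → A) (x : Fin m → ℝ) : A := ∑ j ∈ Finset.univ.erase 0, x j • e j

/-- Partial derivative in the `j`-th coordinate. -/
def pd (j : Fin m) (f : (Fin m → ℝ) → A) (x : Fin m → ℝ) : A :=
  fderiv ℝ f x (Pi.single j 1)

/-- The Euler operator `E = Σ_j x_j ∂_{x_j}`. -/
def eulerOp (f : (Fin m → ℝ) → A) (x : Fin m → ℝ) : A := ∑ j, x j • pd j f x

/-- The `α`-deformed inversion `I_α[f](x) = (x̲/|x̲|^{m+α}) f(x̲/|x̲|²)`. -/
def inv' (e : Fin m → A) (α : ℝ) (f : (Fin m → ℝ) → A) (x : Fin m → ℝ) : A :=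
  (nsq x ^ (-(((m : ℝ) + α) / 2))) • (vx e x * f ((nsq x)⁻¹ • x))

lemma mv_diff (p : MvPolynomial (Fin m) ℝ) :
    Differentiable ℝ fun x : Fin m → ℝ => MvPolynomial.eval x p := by
  induction p using MvPolynomial.induction_on with
  | C a => simpa using differentiable_const a
  | add p q hp hq => simpa using hp.fun_add hq
  | mul_X p i hp => simpa using hp.fun_mul ((ContinuousLinearMap.proj i).differentiable)

lemma nsq_pos {x : Fin m → ℝ} (hx : x ≠ 0) : 0 < nsq x := by
  obtain ⟨j, hj⟩ : ∃ j, x j ≠ 0 := by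
    by_contra h; push_neg at h; exact hx (funext h)
  exact Finset.sum_pos' (fun i _ => sq_nonneg _) ⟨j, Finset.mem_univ j, by positivity⟩

lemma nsq_smul (c : ℝ) (x : Fin m → ℝ) : nsq (c • x) = c ^ 2 * nsq x := by
  simp [nsq, mul_pow, Finset.mul_sum]

lemma vx_smul (e : Fin m → A) (c : ℝ) (x : Fin m → ℝ) : vx e (c • x) = c • vx e x := by
  simp [vx, Finset.smul_sum, smul_smul]

lemma two_smul_inj {a b : A} (h : (2:ℝ) • a = (2:ℝ) • b) : a = b := by
  have := congrArg (fun y => ((2:ℝ)⁻¹) • y) h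
  simpa [smul_smul] using this

lemma e_sq (e : Fin m → A)
    (he : ∀ p q : Fin m, e p * e q + e q * e p = if p = q then (-2 : A) else 0)
    (p : Fin m) : e p * e p = -1 := by
  have h := he p p
  rw [if_pos rfl] at h
  apply two_smul_inj
  rw [two_smul, h, smul_neg, ← Algebra.algebraMap_eq_smul_one, map_ofNat]

lemma vx_sq (e : Fin m → A)
    (he : ∀ p q : Fin m, e p * e q + e q * e p = if p = q then (-2 : A) else 0)
    (x : Fin m → ℝ) : vx e x * vx e x = (-(nsq x)) • 1 := by
  apply two_smul_inj
  have expand : vx e x * vx e x = ∑ p, ∑ q, (x p * x q) • (e p * e q) := by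
    rw [vx, Finset.sum_mul_sum]
    congr 1; funext p; congr 1; funext q
    rw [smul_mul_assoc, mul_smul_comm, smul_smul]
  have swap : vx e x * vx e x = ∑ p, ∑ q, (x p * x q) • (e q * e p) := by
    rw [expand, Finset.sum_comm]
    congr 1; funext p; congr 1; funext q; rw [mul_comm (x q)]
  calc (2:ℝ) • (vx e x * vx e x) = ∑ p, ∑ q, (x p * x q) • (e p * e q + e q * e p) := by
        rw [two_smul]
        nth_rewrite 1 [expand]
        nth_rewrite 1 [swap]
        rw [← Finset.sum_add_distrib]
        congr 1; funext p
        rw [← Finset.sum_add_distrib]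
        congr 1; funext q
        rw [← smul_add]
    _ = ∑ p, (x p * x p) • (-2 : A) := by
        apply Finset.sum_congr rfl; intro p _
        rw [Finset.sum_eq_single p]
        · rw [he, if_pos rfl]
        · intro q _ hq; rw [he, if_neg (Ne.symm hq), smul_zero]
        · intro h; exact absurd (Finset.mem_univ p) h
    _ = (2:ℝ) • ((-(nsq x)) • 1) := by
        have hm2 : (-2 : A) = (-2:ℝ) • (1:A) := by
          rw [neg_smul, ← Algebra.algebraMap_eq_smul_one, map_ofNat]
        have hsum : ∑ p, x p * x p = nsq x := by simp [nsq, sq]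
        rw [← Finset.sum_smul, hm2, smul_smul, smul_smul, hsum]
        congr 1
        ring

lemma vx_eq_bx (e : Fin m → A) (x : Fin m → ℝ) : vx e x = x 0 • e 0 + bx e x := by
  rw [vx, bx, ← Finset.add_sum_erase _ _ (Finset.mem_univ 0)]

lemma sum_single (x : Fin m → ℝ) : ∑ j, x j • (Pi.single j (1:ℝ) : Fin m → ℝ) = x := by
  funext k
  simp [Pi.single_apply, Finset.sum_apply]

lemma euler_eq_fderiv (f : (Fin m → ℝ) → A) (x : Fin m → ℝ) :
    eulerOp f x = fderiv ℝ f x x := by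
  rw [eulerOp]
  simp only [pd]
  calc ∑ j, x j • (fderiv ℝ f x) (Pi.single j 1)
      = (fderiv ℝ f x) (∑ j, x j • (Pi.single j (1:ℝ) : Fin m → ℝ)) := by
        rw [map_sum]; exact Finset.sum_congr rfl fun j _ => (map_smul _ _ _).symm
    _ = (fderiv ℝ f x) x := by rw [sum_single]

lemma key (e : Fin m → A) (α : ℝ) (f : (Fin m → ℝ) → A) (hdf : Differentiable ℝ f)
    {y : Fin m → ℝ} (hy : y ≠ 0) :
    pd 0 (inv' e α f) y =
      (-(((m : ℝ) + α) / 2) * nsq y ^ (-(((m : ℝ) + α) / 2) - 1) * (2 * y 0)) •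
          (vx e y * f ((nsq y)⁻¹ • y))
        + nsq y ^ (-(((m : ℝ) + α) / 2)) •
          (vx e y * ((nsq y)⁻¹ • fderiv ℝ f ((nsq y)⁻¹ • y) (Pi.single 0 1)
               + (-((nsq y)⁻¹ * (2 * y 0) * (nsq y)⁻¹)) • fderiv ℝ f ((nsq y)⁻¹ • y) y)
            + e 0 * f ((nsq y)⁻¹ • y)) := by
  have hs : nsq y ≠ 0 := (nsq_pos hy).ne'
  set β : ℝ := -(((m : ℝ) + α) / 2) with hβ
  set N : (Fin m → ℝ) →L[ℝ] ℝ := ∑ j, (2 * y j) • ContinuousLinearMap.proj j with hNdef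
  have hN : HasFDerivAt nsq N y := by
    have h1 : ∀ j : Fin m, HasFDerivAt (fun w : Fin m → ℝ => w j ^ 2)
        ((2 * y j) • (ContinuousLinearMap.proj j : (Fin m → ℝ) →L[ℝ] ℝ)) y := by
      intro j
      have hp : HasFDerivAt (fun w : Fin m → ℝ => w j)
          (ContinuousLinearMap.proj j : (Fin m → ℝ) →L[ℝ] ℝ) y := by
        exact hasFDerivAt_apply (𝕜 := ℝ) j y
      simpa [Function.comp_def] using (hasDerivAt_pow 2 (y j)).comp_hasFDerivAt y hp
    exact HasFDerivAt.fun_sum (fun j _ => h1 j)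
  have hInv : HasFDerivAt (fun w => (nsq w)⁻¹)
      ((-(ContinuousLinearMap.mulLeftRight ℝ ℝ (nsq y)⁻¹ (nsq y)⁻¹)).comp N) y :=
    (hasFDerivAt_inv' hs).comp y hN
  have hh : HasFDerivAt (fun w => (nsq w)⁻¹ • w)
      ((nsq y)⁻¹ • ContinuousLinearMap.id ℝ (Fin m → ℝ)
        + ((-(ContinuousLinearMap.mulLeftRight ℝ ℝ (nsq y)⁻¹ (nsq y)⁻¹)).comp N).smulRight y) y :=
    hInv.smul (hasFDerivAt_id y)
  have hw : HasFDerivAt (fun w => f ((nsq w)⁻¹ • w))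
      ((fderiv ℝ f ((nsq y)⁻¹ • y)).comp
        ((nsq y)⁻¹ • ContinuousLinearMap.id ℝ (Fin m → ℝ)
          + ((-(ContinuousLinearMap.mulLeftRight ℝ ℝ (nsq y)⁻¹ (nsq y)⁻¹)).comp N).smulRight y)) y :=
    (hdf _).hasFDerivAt.comp y hh
  set Lv : (Fin m → ℝ) →L[ℝ] A :=
    ∑ j, (ContinuousLinearMap.proj j : (Fin m → ℝ) →L[ℝ] ℝ).smulRight (e j) with hLv
  have hvx : HasFDerivAt (vx e) Lv y := by
    have heq : (vx e : (Fin m → ℝ) → A) = ⇑Lv := by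
      funext w
      simp [vx, hLv, ContinuousLinearMap.sum_apply]
    rw [heq]
    exact Lv.hasFDerivAt
  have hmul := hvx.mul' hw
  have hc : HasFDerivAt (fun w => nsq w ^ β) ((β * nsq y ^ (β - 1)) • N) y :=
    hN.rpow_const (Or.inl hs)
  have htot := hc.smul hmul
  have hfd : fderiv ℝ (inv' e α f) y = _ := htot.fderiv
  rw [pd, hfd]
  simp only [ContinuousLinearMap.add_apply, ContinuousLinearMap.smul_apply,
    ContinuousLinearMap.comp_apply, ContinuousLinearMap.smulRight_apply,
    ContinuousLinearMap.id_apply, ContinuousLinearMap.neg_apply,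
    ContinuousLinearMap.mulLeftRight_apply]
  have hNv : N (Pi.single 0 1) = 2 * y 0 := by
    simp [hNdef, ContinuousLinearMap.sum_apply, Pi.single_apply]
  have hLvv : Lv (Pi.single 0 1) = e 0 := by
    simp [hLv, ContinuousLinearMap.sum_apply, Pi.single_apply]
  rw [hNv, hLvv]
  rw [map_add, map_smul, map_smul]
  simp only [smul_eq_mul]
  rw [add_comm]
  simp only [Pi.mul_apply, op_smul_eq_mul]

/-- The deformed raising operator `R = I_α ∘ ∂_{x_1} ∘ I_α` (conjugation of `∂_{x_1}`
by the `α`-deformed inversion) acts on Clifford-algebra-valued polynomials as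
`R = -|x̲|²·∂_{x_1} + x_1·(2E + m - 1 + α) + 𝐱·e_1`, where `E` is the Euler operator
and `𝐱 = Σ_{j≥2} x_j e_j`. -/
theorem deformed_raising_formula (e : Fin m → A)
    (he : ∀ p q : Fin m, e p * e q + e q * e p = if p = q then (-2 : A) else 0)
    (α : ℝ) (f : (Fin m → ℝ) → A)
    (hf : ∃ (N : ℕ) (p : Fin N → MvPolynomial (Fin m) ℝ) (a : Fin N → A),
      f = fun x => ∑ i, MvPolynomial.eval x (p i) • a i) :
    ∀ x : Fin m → ℝ, x ≠ 0 →
      inv' e α (fun y => pd 0 (inv' e α f) y) x =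
        -(nsq x) • pd 0 f x + (x 0) • ((2 : ℝ) • eulerOp f x + ((m : ℝ) - 1 + α) • f x)
          + (bx e x * e 0) * f x := by
  have hdf : Differentiable ℝ f := by
    obtain ⟨N, p, a, rfl⟩ := hf
    exact Differentiable.fun_sum fun i _ => (mv_diff (p i)).smul_const (a i)
  intro x hx
  have hr : 0 < nsq x := nsq_pos hx
  have hrne : nsq x ≠ 0 := hr.ne'
  have hz : (nsq x)⁻¹ • x ≠ 0 := smul_ne_zero (inv_ne_zero hrne) hx
  rw [inv', key e α f hdf hz]
  have hsz : nsq ((nsq x)⁻¹ • x) = (nsq x)⁻¹ := by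
    rw [nsq_smul]; field_simp
  have hz0 : ((nsq x)⁻¹ • x) 0 = (nsq x)⁻¹ * x 0 := rfl
  have hzx : (nsq x)⁻¹⁻¹ • ((nsq x)⁻¹ • x) = x := by
    rw [inv_inv, smul_smul, mul_inv_cancel₀ hrne, one_smul]
  have hvxz : vx e ((nsq x)⁻¹ • x) = (nsq x)⁻¹ • vx e x := vx_smul e _ x
  have hfz : fderiv ℝ f x ((nsq x)⁻¹ • x) = (nsq x)⁻¹ • eulerOp f x := by
    rw [map_smul, euler_eq_fderiv]
  rw [hsz, hzx, hz0, hvxz, hfz]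
  simp only [inv_inv]
  have hpc : (0:ℝ) < nsq x ^ (-(((m:ℝ) + α) / 2)) := Real.rpow_pos_of_pos hr _
  have e2 : ((nsq x)⁻¹ : ℝ) ^ (-(((m:ℝ) + α) / 2)) = (nsq x ^ (-(((m:ℝ) + α) / 2)))⁻¹ :=
    Real.inv_rpow hr.le _
  have e1 : ((nsq x)⁻¹ : ℝ) ^ (-(((m:ℝ) + α) / 2) - 1)
      = (nsq x ^ (-(((m:ℝ) + α) / 2)))⁻¹ * nsq x := by
    rw [Real.inv_rpow hr.le, Real.rpow_sub hr, Real.rpow_one]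
    field_simp
  rw [e1, e2]
  have hVV : ∀ b : A, vx e x * (vx e x * b) = -(nsq x) • b := by
    intro b
    rw [← mul_assoc, vx_sq e he x, smul_mul_assoc, one_mul]
  have hVe : vx e x * (e 0 * f x) = bx e x * e 0 * f x + -(x 0) • f x := by
    rw [← mul_assoc, vx_eq_bx e x, add_mul, smul_mul_assoc, e_sq e he 0, add_mul, smul_mul_assoc]
    rw [neg_one_mul, smul_neg, add_comm, neg_smul]
  simp only [smul_add, mul_add, mul_smul_comm, smul_mul_assoc, smul_smul, hVV, hVe, pd]
  match_scalars
  all_goals field_simp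
  all_goals ring

end
end

section
/- In the Clifford algebra setting with the formal 'holomorphic' variable w := ē_1·x̲ = x_1 + ē_1·𝐱 (where ē_1 = -e_1), the operator R := -|x̲|²·∂_{x_1} + x_1·(2E + 1) + 𝐱·e_1 (i.e. the deformed raising operator with α = 2 - m) satisfies R(w^k) = (k+1)·w^{k+1} for all k ≥ 0. -/
/- The Clifford-analysis setting: `A` is a (normed) algebra containing generators
   `e 0, …, e (m-1)` satisfying the Clifford relations `e p * e q + e q * e p = -2δ_{pq}`;
   functions on `ℝ^m` take values in `A`. -/

noncomputable section

open Finset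

variable {m : ℕ} [NeZero m] {A : Type*} [NormedRing A] [NormedAlgebra ℝ A]

/-- The formal `holomorphic' variable `w = ē_1·x̲ = x_1 + ē_1·𝐱` (with `ē_1 = -e_1`). -/
def wvar (e : Fin m → A) (x : Fin m → ℝ) : A :=
  (x 0) • (1 : A) + ∑ j ∈ Finset.univ.erase 0, x j • (-(e 0) * e j)

def cvec (e : Fin m → A) (j : Fin m) : A := if j = 0 then 1 else -(e 0) * e j

def Wclm (e : Fin m → A) : (Fin m → ℝ) →L[ℝ] A :=
  ∑ j, (ContinuousLinearMap.proj j).smulRight (cvec e j)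

lemma Wclm_apply (e : Fin m → A) (x : Fin m → ℝ) : Wclm e x = ∑ j, x j • cvec e j := by
  simp [Wclm]

lemma wvar_eq_Wclm (e : Fin m → A) (x : Fin m → ℝ) : wvar e x = Wclm e x := by
  have h0 : cvec e (0 : Fin m) = 1 := by simp [cvec]
  have hsum : ∀ j ∈ Finset.univ.erase (0 : Fin m),
      x j • cvec e j = x j • (-(e 0) * e j) := fun j hj => by
    simp [cvec, (Finset.mem_erase.mp hj).1]
  rw [Wclm_apply, ← Finset.add_sum_erase _ (fun j => x j • cvec e j) (Finset.mem_univ 0),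
    h0, Finset.sum_congr rfl hsum, wvar]

lemma hasFDerivAt_wvar (e : Fin m → A) (x : Fin m → ℝ) :
    HasFDerivAt (wvar e) (Wclm e) x := by
  have : wvar e = ⇑(Wclm e) := funext fun y => wvar_eq_Wclm e y
  rw [this]; exact (Wclm e).hasFDerivAt

def Dpow (e : Fin m → A) (k : ℕ) (x : Fin m → ℝ) : (Fin m → ℝ) →L[ℝ] A :=
  ∑ i ∈ Finset.range k, (wvar e x ^ i) •
    ((ContinuousLinearMap.mul ℝ A).flip (wvar e x ^ (k - 1 - i))).comp (Wclm e)

lemma Dpow_apply (e : Fin m → A) (k : ℕ) (x : Fin m → ℝ) (h : Fin m → ℝ) :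
    Dpow e k x h = ∑ i ∈ Finset.range k, wvar e x ^ i * (Wclm e h * wvar e x ^ (k - 1 - i)) := by
  simp [Dpow, mul_assoc]

lemma hasFDerivAt_wpow (e : Fin m → A) (k : ℕ) (x : Fin m → ℝ) :
    HasFDerivAt (fun y => wvar e y ^ k) (Dpow e k x) x := by
  induction k with
  | zero =>
      have h0 : Dpow e 0 x = 0 := by ext h; simp [Dpow]
      simp only [pow_zero, h0]
      exact hasFDerivAt_const 1 x
  | succ k ih =>
      have h := ih.fun_mul' (hasFDerivAt_wvar e x)
      have hfun : (fun y => wvar e y ^ k * wvar e y) = fun y => wvar e y ^ (k + 1) := by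
        funext y; rw [pow_succ]
      rw [hfun] at h
      refine h.congr_fderiv ?_; symm
      apply ContinuousLinearMap.ext; intro v
      rw [ContinuousLinearMap.add_apply, Dpow_apply, ContinuousLinearMap.smul_apply,
        ContinuousLinearMap.smul_apply, op_smul_eq_mul, Dpow_apply, smul_eq_mul,
        Finset.sum_range_succ]
      have h1 : ∀ i ∈ Finset.range k,
          wvar e x ^ i * (Wclm e v * wvar e x ^ (k + 1 - 1 - i))
            = (wvar e x ^ i * (Wclm e v * wvar e x ^ (k - 1 - i))) * wvar e x := by
        intro i hi
        have : k + 1 - 1 - i = (k - 1 - i) + 1 := by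
          have := Finset.mem_range.mp hi; omega
        rw [this, pow_succ, mul_assoc, mul_assoc]
      rw [Finset.sum_congr rfl h1, ← Finset.sum_mul]
      have h2 : k + 1 - 1 - k = 0 := by omega
      rw [h2, pow_zero, mul_one, add_comm]

lemma pd0_wpow (e : Fin m → A) (k : ℕ) (x : Fin m → ℝ) :
    pd 0 (fun y => wvar e y ^ k) x = k • wvar e x ^ (k - 1) := by
  rw [pd, (hasFDerivAt_wpow e k x).fderiv, Dpow_apply]
  have hW : Wclm e (Pi.single 0 1) = 1 := by
    rw [Wclm_apply, Finset.sum_eq_single 0]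
    · simp [cvec]
    · intro j _ hj
      rw [Pi.single_eq_of_ne hj, zero_smul]
    · intro h; exact absurd (Finset.mem_univ _) h
  rw [hW]
  have h1 : ∀ i ∈ Finset.range k,
      wvar e x ^ i * (1 * wvar e x ^ (k - 1 - i)) = wvar e x ^ (k - 1) := fun i hi => by
    rw [one_mul, ← pow_add]
    congr 1
    have := Finset.mem_range.mp hi; omega
  rw [Finset.sum_congr rfl h1, Finset.sum_const, Finset.card_range]

lemma euler_wpow (e : Fin m → A) (k : ℕ) (x : Fin m → ℝ) :
    eulerOp (fun y => wvar e y ^ k) x = k • wvar e x ^ k := by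
  unfold eulerOp pd
  simp only [(hasFDerivAt_wpow e k x).fderiv]
  have hx : ∑ j, x j • (Pi.single j 1 : Fin m → ℝ) = x := by
    have : ∀ j : Fin m, x j • (Pi.single j 1 : Fin m → ℝ) = Pi.single j (x j) := fun j => by
      rw [← Pi.single_smul, smul_eq_mul, mul_one]
    rw [Finset.sum_congr rfl fun j _ => this j, Finset.univ_sum_single]
  have hsum : ∑ j, x j • Dpow e k x (Pi.single j 1) = Dpow e k x x := by
    simp only [← map_smul, ← map_sum]
    rw [hx]
  rw [hsum, Dpow_apply, ← wvar_eq_Wclm]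
  have h1 : ∀ i ∈ Finset.range k,
      wvar e x ^ i * (wvar e x * wvar e x ^ (k - 1 - i)) = wvar e x ^ k := fun i hi => by
    rw [← pow_succ', ← pow_add]
    congr 1
    have := Finset.mem_range.mp hi; omega
  rw [Finset.sum_congr rfl h1, Finset.sum_const, Finset.card_range]

lemma e0_sq (e : Fin m → A)
    (he : ∀ p q : Fin m, e p * e q + e q * e p = if p = q then (-2 : A) else 0) :
    e 0 * e 0 = -1 := by
  have h : e 0 * e 0 + e 0 * e 0 = -2 := by simpa using he 0 0
  have h2 : (2 : ℝ) • (e 0 * e 0) = (2 : ℝ) • (-1 : A) := by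
    rw [two_smul, two_smul, h]
    rw [← one_add_one_eq_two, neg_add]
  exact smul_right_injective A (two_ne_zero) h2

lemma anti (e : Fin m → A)
    (he : ∀ p q : Fin m, e p * e q + e q * e p = if p = q then (-2 : A) else 0)
    {p q : Fin m} (h : p ≠ q) : e p * e q = -(e q * e p) := by
  have := he p q
  rw [if_neg h] at this
  exact eq_neg_of_add_eq_zero_left this

lemma bb (e : Fin m → A)
    (he : ∀ p q : Fin m, e p * e q + e q * e p = if p = q then (-2 : A) else 0)
    {i j : Fin m} (hi : i ≠ 0) :
    (-(e 0) * e i) * (-(e 0) * e j) = e i * e j := by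
  have h1 : (-(e 0) * e i) * (-(e 0) * e j) = e 0 * (e i * e 0) * e j := by noncomm_ring
  rw [h1, anti e he hi]
  have h2 : e 0 * -(e 0 * e i) * e j = -(e 0 * e 0) * (e i * e j) := by noncomm_ring
  rw [h2, e0_sq e he, neg_neg, one_mul]

lemma vsq (e : Fin m → A)
    (he : ∀ p q : Fin m, e p * e q + e q * e p = if p = q then (-2 : A) else 0)
    (x : Fin m → ℝ) :
    (∑ j ∈ Finset.univ.erase 0, x j • (-(e 0) * e j)) *
      (∑ j ∈ Finset.univ.erase 0, x j • (-(e 0) * e j))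
      = (x 0 ^ 2 - ∑ j, x j ^ 2) • (1 : A) := by
  set S := (Finset.univ.erase (0 : Fin m)) with hS
  set b : Fin m → A := fun j => -(e 0) * e j with hb
  set v : A := ∑ j ∈ S, x j • b j with hv
  have hvv : v * v = ∑ i ∈ S, ∑ j ∈ S, (x i * x j) • (b i * b j) := by
    rw [hv, Finset.sum_mul_sum]
    exact Finset.sum_congr rfl fun i _ => Finset.sum_congr rfl fun j _ =>
      smul_mul_smul_comm (x i) (b i) (x j) (b j)
  have hvv2 : v * v = ∑ i ∈ S, ∑ j ∈ S, (x i * x j) • (b j * b i) := by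
    rw [hvv, Finset.sum_comm]
    exact Finset.sum_congr rfl fun i _ => Finset.sum_congr rfl fun j _ => by
      rw [mul_comm (x j) (x i)]
  have hdiag : v * v + v * v = ∑ i ∈ S, (x i * x i) • (-2 : A) := by
    nth_rewrite 2 [hvv2]
    rw [hvv, ← Finset.sum_add_distrib]
    have : ∀ i ∈ S, ((∑ j ∈ S, (x i * x j) • (b i * b j))
        + ∑ j ∈ S, (x i * x j) • (b j * b i)) = (x i * x i) • (-2 : A) := by
      intro i hi
      rw [← Finset.sum_add_distrib]
      have hterm : ∀ j ∈ S, (x i * x j) • (b i * b j) + (x i * x j) • (b j * b i)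
          = (x i * x j) • (if i = j then (-2 : A) else 0) := by
        intro j hj
        rw [← smul_add, hb]
        have hi0 : i ≠ 0 := (Finset.mem_erase.mp hi).1
        have hj0 : j ≠ 0 := (Finset.mem_erase.mp hj).1
        simp only
        rw [bb e he hi0, bb e he hj0, he i j]
      rw [Finset.sum_congr rfl hterm, Finset.sum_eq_single i]
      · rw [if_pos rfl]
      · intro j _ hj
        rw [if_neg (fun h => hj h.symm), smul_zero]
      · intro h; exact absurd hi h
    rw [Finset.sum_congr rfl this]
  have hsumS : ∑ i ∈ S, x i * x i = (∑ j, x j ^ 2) - x 0 ^ 2 := by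
    have h1 : (∑ j, x j ^ 2) = x 0 ^ 2 + ∑ j ∈ S, x j ^ 2 :=
      (Finset.add_sum_erase _ (fun j => x j ^ 2) (Finset.mem_univ 0)).symm
    have h2 : ∑ i ∈ S, x i * x i = ∑ i ∈ S, x i ^ 2 :=
      Finset.sum_congr rfl fun i _ => (sq (x i)).symm
    rw [h2, h1]; ring
  have hrw : ∑ i ∈ S, (x i * x i) • (-2 : A) = ((∑ j, x j ^ 2) - x 0 ^ 2) • (-2 : A) := by
    rw [← Finset.sum_smul, hsumS]
  have hneg2 : (-2 : A) = (-2 : ℝ) • (1 : A) := by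
    rw [neg_smul, two_smul, one_add_one_eq_two]
  have key : (2 : ℝ) • (v * v) = (2 : ℝ) • ((x 0 ^ 2 - ∑ j, x j ^ 2) • (1 : A)) := by
    rw [two_smul, two_smul, hdiag, hrw, hneg2, smul_smul]
    match_scalars
    ring
  exact smul_right_injective A (two_ne_zero) key

lemma wsq (e : Fin m → A)
    (he : ∀ p q : Fin m, e p * e q + e q * e p = if p = q then (-2 : A) else 0)
    (x : Fin m → ℝ) :
    wvar e x * wvar e x = (2 * x 0) • wvar e x - (∑ j, x j ^ 2) • (1 : A) := by
  rw [wvar]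
  set v : A := ∑ j ∈ Finset.univ.erase 0, x j • (-(e 0) * e j) with hv
  have expand : (x 0 • (1 : A) + v) * (x 0 • (1 : A) + v)
      = (x 0 * x 0) • (1 : A) + (2 * x 0) • v + v * v := by
    simp only [add_mul, mul_add, smul_mul_assoc, mul_smul_comm, one_mul, mul_one, smul_smul]
    module
  rw [expand, hv, vsq e he x, ← hv]
  match_scalars <;> ring

lemma bxe0 (e : Fin m → A)
    (he : ∀ p q : Fin m, e p * e q + e q * e p = if p = q then (-2 : A) else 0)
    (x : Fin m → ℝ) :
    (∑ j ∈ Finset.univ.erase 0, x j • e j) * e 0 = wvar e x - x 0 • (1 : A) := by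
  rw [wvar, add_sub_cancel_left, Finset.sum_mul]
  refine Finset.sum_congr rfl fun j hj => ?_
  rw [smul_mul_assoc, anti e he (Finset.mem_erase.mp hj).1, neg_mul]


/-- With `w = ē_1·x̲ = x_1 + ē_1·𝐱` (where `ē_1 = -e_1`), the deformed raising operator
with `α = 2 - m`, i.e. `R = -|x̲|²·∂_{x_1} + x_1·(2E + 1) + 𝐱·e_1`, satisfies
`R(w^k) = (k+1)·w^{k+1}` for all `k ≥ 0`. -/
theorem raising_on_holomorphic_powers (e : Fin m → A)
    (he : ∀ p q : Fin m, e p * e q + e q * e p = if p = q then (-2 : A) else 0)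
    (k : ℕ) :
    ∀ x : Fin m → ℝ,
      -(nsq x) • pd 0 (fun y => wvar e y ^ k) x
          + (x 0) • ((2 : ℝ) • eulerOp (fun y => wvar e y ^ k) x + wvar e x ^ k)
          + (bx e x * e 0) * wvar e x ^ k
        = ((k : ℝ) + 1) • wvar e x ^ (k + 1) := by
  intro x
  rw [nsq, bx, pd0_wpow, euler_wpow, bxe0 e he x]
  cases k with
  | zero =>
      simp only [Nat.cast_zero, pow_zero, zero_smul, smul_zero, mul_one, one_mul, zero_add,
        sub_mul, pow_one, zero_smul, smul_zero]
      module
  | succ n =>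
      have hppow : wvar e x ^ (n + 1 + 1)
          = (2 * x 0) • wvar e x ^ (n + 1) - (∑ j, x j ^ 2) • wvar e x ^ n := by
        have h1 : wvar e x ^ (n + 1 + 1) = (wvar e x * wvar e x) * wvar e x ^ n := by
          rw [show n + 1 + 1 = 2 + n from by omega, pow_add, pow_two]
        rw [h1, wsq e he x, sub_mul, smul_mul_assoc, smul_mul_assoc, one_mul, ← pow_succ']
      rw [sub_mul, smul_mul_assoc, one_mul, ← pow_succ']
      simp only [← Nat.cast_smul_eq_nsmul ℝ]
      rw [show n + 1 - 1 = n from rfl, hppow]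
      match_scalars <;> ring

end
end
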